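/- Let Q_0 = L_0 − H_0 and Q_2 = L_2 − H_2 be the genus-1 heat operators, where L_0, L_2 act on smooth functions φ(z₁, λ₄, λ₆) by L_0 = 4λ₄ ∂_{λ₄} + 6λ₆ ∂_{λ₆}, L_2 = 6λ₆ ∂_{λ₄} − (4/3)λ₄² ∂_{λ₆}, and H_0 = z₁∂₁ − 1, H_2 = (1/2)∂₁² − (1/6)λ₄ z₁². Then [Q_0, Q_2] = 2·Q_2 as operators on smooth functions. -/

import Mathlib

/-- Partial derivative in the `i`-th coordinate of a function on `Fin 3 → ℝ`
(coordinates: `x 0 = z₁`, `x 1 = λ₄`, `x 2 = λ₆`). -/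
noncomputable def pd3 (i : Fin 3) (f : (Fin 3 → ℝ) → ℝ) : (Fin 3 → ℝ) → ℝ :=
  fun x => fderiv ℝ f x (Pi.single i 1)

/-- `L₀ = 4λ₄ ∂_{λ₄} + 6λ₆ ∂_{λ₆}`. -/
noncomputable def L0op (f : (Fin 3 → ℝ) → ℝ) : (Fin 3 → ℝ) → ℝ :=
  fun x => 4 * x 1 * pd3 1 f x + 6 * x 2 * pd3 2 f x

/-- `L₂ = 6λ₆ ∂_{λ₄} − (4/3)λ₄² ∂_{λ₆}`. -/
noncomputable def L2op (f : (Fin 3 → ℝ) → ℝ) : (Fin 3 → ℝ) → ℝ :=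
  fun x => 6 * x 2 * pd3 1 f x - (4/3) * (x 1) ^ 2 * pd3 2 f x

/-- `Q₀ = L₀ − H₀` with `H₀ = z₁∂₁ − 1`. -/
noncomputable def Q0op (f : (Fin 3 → ℝ) → ℝ) : (Fin 3 → ℝ) → ℝ :=
  fun x => L0op f x - (x 0 * pd3 0 f x - f x)

/-- `Q₂ = L₂ − H₂` with `H₂ = (1/2)∂₁² − (1/6)λ₄z₁²`. -/
noncomputable def Q2op (f : (Fin 3 → ℝ) → ℝ) : (Fin 3 → ℝ) → ℝ :=
  fun x => L2op f x - ((1/2) * pd3 0 (pd3 0 f) x - (1/6) * x 1 * (x 0) ^ 2 * f x)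

@[fun_prop]
theorem pd3_contDiff {f : (Fin 3 → ℝ) → ℝ} (hf : ContDiff ℝ (⊤ : ℕ∞) f) (i : Fin 3) :
    ContDiff ℝ (⊤ : ℕ∞) (pd3 i f) :=
  (hf.fderiv_right (le_refl _)).clm_apply contDiff_const

@[fun_prop]
theorem pd3_diff {f : (Fin 3 → ℝ) → ℝ} (hf : ContDiff ℝ (⊤ : ℕ∞) f) (i : Fin 3) :
    Differentiable ℝ (pd3 i f) :=
  (pd3_contDiff hf i).differentiable (by simp)

theorem pd3_add {f g : (Fin 3 → ℝ) → ℝ} (hf : Differentiable ℝ f)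
    (hg : Differentiable ℝ g) (i : Fin 3) :
    pd3 i (fun y => f y + g y) = fun x => pd3 i f x + pd3 i g x := by
  funext x
  simp [pd3, fderiv_fun_add (hf x) (hg x)]

theorem pd3_sub {f g : (Fin 3 → ℝ) → ℝ} (hf : Differentiable ℝ f)
    (hg : Differentiable ℝ g) (i : Fin 3) :
    pd3 i (fun y => f y - g y) = fun x => pd3 i f x - pd3 i g x := by
  funext x
  simp [pd3, fderiv_fun_sub (hf x) (hg x)]

theorem pd3_mul {f g : (Fin 3 → ℝ) → ℝ} (hf : Differentiable ℝ f)
    (hg : Differentiable ℝ g) (i : Fin 3) :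
    pd3 i (fun y => f y * g y) = fun x => pd3 i f x * g x + f x * pd3 i g x := by
  funext x
  simp [pd3, fderiv_fun_mul (hf x) (hg x)]
  ring

theorem pd3_const (c : ℝ) (i : Fin 3) : pd3 i (fun _ => c) = fun _ => 0 := by
  funext x; simp [pd3]

theorem pd3_coord (i j : Fin 3) :
    pd3 i (fun y => y j) = fun _ => if j = i then (1:ℝ) else 0 := by
  funext x
  have : (fun y : Fin 3 → ℝ => y j) = (ContinuousLinearMap.proj j : (Fin 3 → ℝ) →L[ℝ] ℝ) := rfl
  rw [pd3, this, ContinuousLinearMap.fderiv]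
  simp [Pi.single_apply]

theorem pd3_swap {f : (Fin 3 → ℝ) → ℝ} (hf : ContDiff ℝ (⊤ : ℕ∞) f) (i j : Fin 3) :
    pd3 i (pd3 j f) = pd3 j (pd3 i f) := by
  funext x
  have hd : DifferentiableAt ℝ (fderiv ℝ f) x :=
    ((hf.fderiv_right (m := (⊤ : ℕ∞)) (le_refl _)).differentiable (by simp)).differentiableAt
  have h1 : ∀ k l : Fin 3, pd3 k (pd3 l f) x
      = (fderiv ℝ (fderiv ℝ f) x (Pi.single k 1)) (Pi.single l 1) := by
    intro k l
    show fderiv ℝ (fun y => (fderiv ℝ f y) (Pi.single l 1)) x (Pi.single k 1) = _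
    rw [fderiv_clm_apply hd (differentiableAt_const _)]
    simp
  rw [h1, h1]
  exact (hf.contDiffAt.isSymmSndFDerivAt (by rw [minSmoothness_of_isRCLikeNormedField]; exact WithTop.coe_le_coe.mpr le_top)).eq _ _

/-- `[Q₀, Q₂] = 2 Q₂` as operators on smooth functions. -/
theorem genus1_heat_commutator (f : (Fin 3 → ℝ) → ℝ) (hf : ContDiff ℝ (⊤ : ℕ∞) f)
    (x : Fin 3 → ℝ) :
    Q0op (Q2op f) x - Q2op (Q0op f) x = 2 * Q2op f x := by
  have h1 : Differentiable ℝ f := hf.differentiable (by simp)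
  have h0 : ContDiff ℝ (⊤ : ℕ∞) (pd3 0 f) := pd3_contDiff hf 0
  have h10 : ContDiff ℝ (⊤ : ℕ∞) (pd3 1 f) := pd3_contDiff hf 1
  have h20 : ContDiff ℝ (⊤ : ℕ∞) (pd3 2 f) := pd3_contDiff hf 2
  unfold Q0op Q2op L0op L2op
  simp only [pow_two]
  simp (disch := fun_prop) only [pd3_add, pd3_sub, pd3_mul, pd3_const, pd3_coord, Fin.reduceEq, reduceIte]
  simp only [pd3_swap hf 1 0, pd3_swap hf 2 0, pd3_swap hf 2 1,
    pd3_swap h0 1 0, pd3_swap h0 2 0, pd3_swap h0 2 1,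
    pd3_swap h10 1 0, pd3_swap h10 2 0, pd3_swap h10 2 1,
    pd3_swap h20 1 0, pd3_swap h20 2 0, pd3_swap h20 2 1]
  norm_num
  ring
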